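/- arXiv:2603.02654 — 2 statements merged into one kernel-verified Lean document; each statement's English description precedes it below -/
import Mathlib

section
/- The on-policy per-agent value iteration operator R^i, defined by (R^i f)(s,a^{-i}) = f(s,a^{-i}) + E_{a^i~π^i} E_π [ Σ_{t≥0} (γλ)^t (r_t + γ f(s_{t+1},a^{-i}_{t+1}) - f(s_t,a^{-i}_t)) | s_0=s, a_0^i=a^i, a_0^{-i}=a^{-i} ], is a γ-contraction in the sup-norm on bounded functions f of (s,a^{-i}), for any λ ∈ (0,1] and discount γ ∈ [0,1). -/
/-- One-step expectation operator of a Markov kernel `K` on the finite space `X`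
of state/joint-action pairs: `(expK K h) x = E[h(x₁) | x₀ = x]`. -/
noncomputable def expK {X : Type*} [Fintype X] (K : X → X → ℝ) (h : X → ℝ) (x : X) : ℝ :=
  ∑ y, K x y * h y

/-- The on-policy per-agent value-iteration operator `R^i`.
`K` is the transition kernel of the chain `(s_t, a_t)` induced by following the joint
policy `π`, `r` is the (bounded) reward, `pii` is agent `i`'s policy, and `f` is a
function of `(s, a^{-i})` (encoded as a function on `S × Π_j A j` not depending on the
`i`-th action coordinate).  The inner trajectory expectation of the `(γλ)^t`-discounted
per-agent TD errors is computed via iterates of `expK K`, and the outer expectation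
averages the initial action of agent `i` under `π^i`. -/
noncomputable def Rop {S : Type*} {ι : Type*} [Fintype S] [Fintype ι] [DecidableEq ι]
    (A : ι → Type*) [∀ j, Fintype (A j)] (i : ι)
    (K : (S × ((j : ι) → A j)) → (S × ((j : ι) → A j)) → ℝ)
    (r : (S × ((j : ι) → A j)) → ℝ) (pii : S → A i → ℝ) (γ lam : ℝ)
    (f : (S × ((j : ι) → A j)) → ℝ) : (S × ((j : ι) → A j)) → ℝ :=
  fun x => f x + ∑ b : A i, pii x.1 b *
    ∑' t : ℕ, (γ * lam) ^ t *
      ((expK K)^[t] (fun y => r y + γ * expK K f y - f y)) (x.1, Function.update x.2 i b)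

section aux
variable {X : Type*} [Fintype X]

lemma expK_lin (K : X → X → ℝ) (c : ℝ) (a b : X → ℝ) :
    expK K (fun y => c * a y - b y) = fun y => c * expK K a y - expK K b y := by
  funext x
  simp [expK, mul_sub, Finset.sum_sub_distrib, Finset.mul_sum, mul_left_comm]

lemma expK_iter_lin (K : X → X → ℝ) (c : ℝ) (t : ℕ) (a b : X → ℝ) :
    (expK K)^[t] (fun y => c * a y - b y) = fun y => c * (expK K)^[t] a y - (expK K)^[t] b y := by
  induction t generalizing a b with
  | zero => simp
  | succ t ih =>
    rw [Function.iterate_succ_apply, Function.iterate_succ_apply, Function.iterate_succ_apply,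
      expK_lin, ih]

lemma expK_abs_le (K : X → X → ℝ) (hK0 : ∀ x y, 0 ≤ K x y) (hK1 : ∀ x, ∑ y, K x y = 1)
    (v : X → ℝ) (x : X) : |expK K v x| ≤ ‖v‖ := by
  calc |∑ y, K x y * v y| ≤ ∑ y, |K x y * v y| := Finset.abs_sum_le_sum_abs _ _
    _ ≤ ∑ y, K x y * ‖v‖ := by
        refine Finset.sum_le_sum fun y _ => ?_
        rw [abs_mul, abs_of_nonneg (hK0 x y)]
        exact mul_le_mul_of_nonneg_left (by simpa using norm_le_pi_norm v y) (hK0 x y)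
    _ = ‖v‖ := by rw [← Finset.sum_mul, hK1, one_mul]

lemma expK_iter_abs_le (K : X → X → ℝ) (hK0 : ∀ x y, 0 ≤ K x y) (hK1 : ∀ x, ∑ y, K x y = 1) :
    ∀ (t : ℕ) (v : X → ℝ) (x : X), |(expK K)^[t] v x| ≤ ‖v‖ := by
  intro t
  induction t with
  | zero => intro v x; simpa [Real.norm_eq_abs] using norm_le_pi_norm v x
  | succ t ih =>
    intro v x
    rw [Function.iterate_succ_apply]
    calc |(expK K)^[t] (expK K v) x| ≤ ‖expK K v‖ := ih _ _
      _ ≤ ‖v‖ := by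
        rw [pi_norm_le_iff_of_nonneg (norm_nonneg v)]
        intro y
        simpa [Real.norm_eq_abs] using expK_abs_le K hK0 hK1 v y

lemma summable_geom_bdd {q C : ℝ} (hq0 : 0 ≤ q) (hq1 : q < 1) (v : ℕ → ℝ)
    (hv : ∀ t, |v t| ≤ C) : Summable (fun t => q ^ t * v t) := by
  refine Summable.of_norm_bounded
    ((summable_geometric_of_lt_one hq0 hq1).mul_right C) (fun t => ?_)
  rw [Real.norm_eq_abs, abs_mul, abs_pow, abs_of_nonneg hq0]
  exact mul_le_mul_of_nonneg_left (hv t) (pow_nonneg hq0 t)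

lemma abs_tsum_geom_bdd {q C : ℝ} (hq0 : 0 ≤ q) (hq1 : q < 1) (v : ℕ → ℝ)
    (hv : ∀ t, |v t| ≤ C) : |∑' t, q ^ t * v t| ≤ (1 - q)⁻¹ * C := by
  have hs : Summable (fun t => |q ^ t * v t|) :=
    (summable_geom_bdd hq0 hq1 v hv).abs
  calc |∑' t, q ^ t * v t| ≤ ∑' t, |q ^ t * v t| :=
        norm_tsum_le_tsum_norm (f := fun t => q ^ t * v t) hs
    _ ≤ ∑' t, q ^ t * C := by
        refine Summable.tsum_le_tsum (fun t => ?_) hs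
          ((summable_geometric_of_lt_one hq0 hq1).mul_right C)
        rw [abs_mul, abs_pow, abs_of_nonneg hq0]
        exact mul_le_mul_of_nonneg_left (hv t) (pow_nonneg hq0 t)
    _ = (1 - q)⁻¹ * C := by
        rw [tsum_mul_right, tsum_geometric_of_lt_one hq0 hq1, mul_comm]

end aux

/-- For any `λ ∈ (0,1]` and `γ ∈ [0,1)`, the on-policy per-agent
operator `R^i` is a `γ`-contraction in the sup-norm on (bounded) functions of
`(s, a^{-i})`. -/
theorem Rop_gamma_contraction {S : Type*} {ι : Type*} [Fintype S] [Fintype ι]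
    [DecidableEq ι] (A : ι → Type*) [∀ j, Fintype (A j)] (i : ι)
    (K : (S × ((j : ι) → A j)) → (S × ((j : ι) → A j)) → ℝ)
    (hK0 : ∀ x y, 0 ≤ K x y) (hK1 : ∀ x, ∑ y, K x y = 1)
    (r : (S × ((j : ι) → A j)) → ℝ)
    (pii : S → A i → ℝ) (hpi0 : ∀ s b, 0 ≤ pii s b) (hpi1 : ∀ s, ∑ b, pii s b = 1)
    (γ lam : ℝ) (hγ0 : 0 ≤ γ) (hγ1 : γ < 1) (hlam0 : 0 < lam) (hlam1 : lam ≤ 1)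
    (f g : (S × ((j : ι) → A j)) → ℝ)
    (hf : ∀ s (a b : (j : ι) → A j), (∀ j, j ≠ i → a j = b j) → f (s, a) = f (s, b))
    (hg : ∀ s (a b : (j : ι) → A j), (∀ j, j ≠ i → a j = b j) → g (s, a) = g (s, b)) :
    ‖Rop A i K r pii γ lam f - Rop A i K r pii γ lam g‖ ≤ γ * ‖f - g‖ := by
  set E : ((S × ((j : ι) → A j)) → ℝ) → ((S × ((j : ι) → A j)) → ℝ) := expK K with hE
  set q : ℝ := γ * lam with hqdef
  have hq0 : 0 ≤ q := mul_nonneg hγ0 hlam0.le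
  have hqγ : q ≤ γ := by rw [hqdef]; nlinarith
  have hq1 : q < 1 := lt_of_le_of_lt hqγ hγ1
  have hq1' : (0 : ℝ) < 1 - q := by linarith
  set M : ℝ := ‖f - g‖ with hMdef
  have hM0 : 0 ≤ M := norm_nonneg _
  set h : (S × ((j : ι) → A j)) → ℝ := fun y => f y - g y with hhdef
  have hfg : h = f - g := rfl
  have hub : ∀ (t : ℕ) (y : S × ((j : ι) → A j)), |(E^[t] h) y| ≤ M := by
    intro t y
    simpa [hfg, ← hMdef] using expK_iter_abs_le K hK0 hK1 t h y
  -- reduce to pointwise bound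
  rw [pi_norm_le_iff_of_nonneg (mul_nonneg hγ0 hM0)]
  intro x
  rw [Pi.sub_apply, Real.norm_eq_abs]
  set x' : A i → (S × ((j : ι) → A j)) := fun b => (x.1, Function.update x.2 i b) with hx'
  have hx'h : ∀ b, h (x' b) = h x := by
    intro b
    have hup : ∀ j, j ≠ i → Function.update x.2 i b j = x.2 j :=
      fun j hj => Function.update_of_ne hj _ _
    have h1 : f (x.1, Function.update x.2 i b) = f (x.1, x.2) := hf x.1 _ _ hup
    have h2 : g (x.1, Function.update x.2 i b) = g (x.1, x.2) := hg x.1 _ _ hup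
    simp only [hhdef, hx', h1, h2]
  set df : (S × ((j : ι) → A j)) → ℝ := fun y => r y + γ * expK K f y - f y with hdf
  set dg : (S × ((j : ι) → A j)) → ℝ := fun y => r y + γ * expK K g y - g y with hdg
  -- key pointwise identity for the TD-error difference
  have hEsub : (fun y => df y - dg y) = fun y => γ * E h y - h y := by
    funext y
    have h2 : expK K h y = expK K f y - expK K g y := by
      simp [expK, hhdef, mul_sub, Finset.sum_sub_distrib]
    simp only [hdf, hdg, hE, h2]
    ring
  have key : ∀ (b : A i) (t : ℕ),
      (E^[t] df) (x' b) - (E^[t] dg) (x' b)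
        = γ * (E^[t + 1] h) (x' b) - (E^[t] h) (x' b) := by
    intro b t
    have h1 := expK_iter_lin K 1 t df dg
    simp only [one_mul] at h1
    have h3 := expK_iter_lin K γ t (E h) h
    calc (E^[t] df) (x' b) - (E^[t] dg) (x' b)
        = (E^[t] (fun y => df y - dg y)) (x' b) := by rw [hE, h1]
      _ = (E^[t] (fun y => γ * (E h) y - h y)) (x' b) := by rw [hEsub]
      _ = γ * (E^[t] (E h)) (x' b) - (E^[t] h) (x' b) := by rw [hE, h3]
      _ = γ * (E^[t + 1] h) (x' b) - (E^[t] h) (x' b) := by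
          rw [Function.iterate_succ_apply]
  -- summability
  have sum_df : ∀ b, Summable (fun t => q ^ t * (E^[t] df) (x' b)) := fun b =>
    summable_geom_bdd hq0 hq1 _ (fun t => expK_iter_abs_le K hK0 hK1 t df (x' b))
  have sum_dg : ∀ b, Summable (fun t => q ^ t * (E^[t] dg) (x' b)) := fun b =>
    summable_geom_bdd hq0 hq1 _ (fun t => expK_iter_abs_le K hK0 hK1 t dg (x' b))
  have sum_u : ∀ b, Summable (fun t => q ^ t * (E^[t] h) (x' b)) := fun b =>
    summable_geom_bdd hq0 hq1 _ (fun t => hub t (x' b))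
  have sum_u1 : ∀ b, Summable (fun t => q ^ t * (E^[t + 1] h) (x' b)) := fun b =>
    summable_geom_bdd hq0 hq1 _ (fun t => hub (t + 1) (x' b))
  -- per-b tsum identity
  have Tb : ∀ b, (∑' t : ℕ, q ^ t * (E^[t] df) (x' b)) - (∑' t : ℕ, q ^ t * (E^[t] dg) (x' b))
      = γ * (1 - lam) * (∑' t : ℕ, q ^ t * (E^[t + 1] h) (x' b)) - h x := by
    intro b
    rw [← Summable.tsum_sub (sum_df b) (sum_dg b)]
    have e1 : (fun t : ℕ => q ^ t * (E^[t] df) (x' b) - q ^ t * (E^[t] dg) (x' b))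
        = fun t : ℕ => γ * (q ^ t * (E^[t + 1] h) (x' b)) - q ^ t * (E^[t] h) (x' b) := by
      funext t
      rw [← mul_sub, key b t]
      ring
    rw [show (∑' t : ℕ, (q ^ t * (E^[t] df) (x' b) - q ^ t * (E^[t] dg) (x' b)))
        = ∑' t : ℕ, (γ * (q ^ t * (E^[t + 1] h) (x' b)) - q ^ t * (E^[t] h) (x' b))
      from congrArg tsum e1]
    rw [Summable.tsum_sub ((sum_u1 b).mul_left γ) (sum_u b), tsum_mul_left]
    have e2 : (∑' t : ℕ, q ^ t * (E^[t] h) (x' b))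
        = h (x' b) + q * ∑' t : ℕ, q ^ t * (E^[t + 1] h) (x' b) := by
      rw [Summable.tsum_eq_zero_add (sum_u b)]
      congr 1
      · simp
      · rw [← tsum_mul_left]
        apply tsum_congr
        intro t
        rw [pow_succ]
        ring
    rw [e2, hx'h b]
    ring
  -- assemble the pointwise difference
  have main : Rop A i K r pii γ lam f x - Rop A i K r pii γ lam g x
      = ∑ b : A i, pii x.1 b * (γ * (1 - lam) * ∑' t : ℕ, q ^ t * (E^[t + 1] h) (x' b)) := by
    have hπ : ∑ b : A i, pii x.1 b * h x = h x := by
      rw [← Finset.sum_mul, hpi1, one_mul]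
    have expand : Rop A i K r pii γ lam f x - Rop A i K r pii γ lam g x
        = (f x + ∑ b : A i, pii x.1 b * ∑' t : ℕ, q ^ t * (E^[t] df) (x' b))
          - (g x + ∑ b : A i, pii x.1 b * ∑' t : ℕ, q ^ t * (E^[t] dg) (x' b)) := by
      simp only [Rop, ← hqdef, ← hdf, ← hdg, ← hE, ← hx']
      rfl
    rw [expand]
    have step : (f x + ∑ b : A i, pii x.1 b * ∑' t : ℕ, q ^ t * (E^[t] df) (x' b))
        - (g x + ∑ b : A i, pii x.1 b * ∑' t : ℕ, q ^ t * (E^[t] dg) (x' b))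
        = h x + ∑ b : A i, pii x.1 b *
            ((∑' t : ℕ, q ^ t * (E^[t] df) (x' b)) - (∑' t : ℕ, q ^ t * (E^[t] dg) (x' b))) := by
      simp only [mul_sub, Finset.sum_sub_distrib, hhdef]
      ring
    rw [step]
    calc h x + ∑ b : A i, pii x.1 b *
          ((∑' t : ℕ, q ^ t * (E^[t] df) (x' b)) - (∑' t : ℕ, q ^ t * (E^[t] dg) (x' b)))
        = h x + ∑ b : A i, pii x.1 b *
            (γ * (1 - lam) * (∑' t : ℕ, q ^ t * (E^[t + 1] h) (x' b)) - h x) := by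
          congr 1
          exact Finset.sum_congr rfl fun b _ => by rw [Tb b]
      _ = ∑ b : A i, pii x.1 b * (γ * (1 - lam) * ∑' t : ℕ, q ^ t * (E^[t + 1] h) (x' b)) := by
          simp only [mul_sub, Finset.sum_sub_distrib, hπ]
          ring
  rw [main]
  -- final bound
  have hW : ∀ b, |∑' t : ℕ, q ^ t * (E^[t + 1] h) (x' b)| ≤ (1 - q)⁻¹ * M := fun b =>
    abs_tsum_geom_bdd hq0 hq1 _ (fun t => hub (t + 1) (x' b))
  have hcoef : 0 ≤ γ * (1 - lam) := mul_nonneg hγ0 (by linarith)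
  calc |∑ b : A i, pii x.1 b * (γ * (1 - lam) * ∑' t : ℕ, q ^ t * (E^[t + 1] h) (x' b))|
      ≤ ∑ b : A i, |pii x.1 b * (γ * (1 - lam) * ∑' t : ℕ, q ^ t * (E^[t + 1] h) (x' b))| :=
        Finset.abs_sum_le_sum_abs _ _
    _ ≤ ∑ b : A i, pii x.1 b * (γ * (1 - lam) * ((1 - q)⁻¹ * M)) := by
        refine Finset.sum_le_sum fun b _ => ?_
        rw [abs_mul, abs_of_nonneg (hpi0 x.1 b), abs_mul, abs_of_nonneg hcoef]
        exact mul_le_mul_of_nonneg_left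
          (mul_le_mul_of_nonneg_left (hW b) hcoef) (hpi0 x.1 b)
    _ = γ * (1 - lam) * ((1 - q)⁻¹ * M) := by rw [← Finset.sum_mul, hpi1, one_mul]
    _ ≤ γ * M := by
        have hl1 : (1 - lam) * (1 - q)⁻¹ ≤ 1 := by
          rw [← div_eq_mul_inv, div_le_one hq1']
          rw [hqdef]; nlinarith
        nlinarith [mul_le_mul_of_nonneg_left (mul_le_mul_of_nonneg_right hl1 hM0) hγ0]
end

section
/- The off-policy per-agent operator with truncated trace coefficients c_t^i ∈ [0,1] (measurable functions of the trajectory up to time t) is a γ-contraction in the sup-norm: for all bounded f, g of (s, a^{-i}), ‖R^i f − R^i g‖_∞ ≤ γ ‖f − g‖_∞. -/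
/-- Weighted trajectory expectation: `wterm K c h t x hist` is
`E[ (∏_{j=1}^{t} c_j) · h(x_t) | trajectory continues from x after history hist ]`,
where the trace coefficient `c_j` at time `j` may depend (measurably) on the entire
trajectory prefix up to time `j` (encoded as a `List X`), and transitions follow the
behavior-policy chain kernel `K`. -/
noncomputable def wterm {X : Type*} [Fintype X] (K : X → X → ℝ) (c : ℕ → List X → ℝ)
    (h : X → ℝ) : ℕ → X → List X → ℝ
  | 0, x, _ => h x
  | t + 1, x, hist =>
      ∑ y, K x y * c (hist.length + 1) (hist ++ [x, y]) * wterm K c h t y (hist ++ [x])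

section aux
variable {X : Type*} [Fintype X] (K : X → X → ℝ) (c : ℕ → List X → ℝ)

lemma wterm_succ (h : X → ℝ) (t : ℕ) (x : X) (hist : List X) :
    wterm K c h (t+1) x hist =
      ∑ y, K x y * c (hist.length + 1) (hist ++ [x, y]) * wterm K c h t y (hist ++ [x]) := rfl

lemma wterm_sub (u v : X → ℝ) : ∀ (t : ℕ) (x : X) (hist : List X),
    wterm K c (fun y => u y - v y) t x hist = wterm K c u t x hist - wterm K c v t x hist
  | 0, x, hist => rfl
  | (t+1), x, hist => by
    simp only [wterm_succ]
    rw [← Finset.sum_sub_distrib]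
    refine Finset.sum_congr rfl fun y _ => ?_
    rw [wterm_sub u v t]
    ring

variable (hK0 : ∀ x y, 0 ≤ K x y) (hK1 : ∀ x, ∑ y, K x y = 1)
  (hc : ∀ t l, c t l ∈ Set.Icc (0 : ℝ) 1)

include hK0 hK1 hc in
lemma wterm_abs_le (φ : X → ℝ) (M : ℝ) (hM : 0 ≤ M) (hφ : ∀ y, |φ y| ≤ M) :
    ∀ (t : ℕ) (x : X) (hist : List X), |wterm K c φ t x hist| ≤ M
  | 0, x, hist => hφ x
  | (t+1), x, hist => by
    rw [wterm_succ]
    calc |∑ y, K x y * c (hist.length + 1) (hist ++ [x, y]) * wterm K c φ t y (hist ++ [x])|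
        ≤ ∑ y, |K x y * c (hist.length + 1) (hist ++ [x, y]) * wterm K c φ t y (hist ++ [x])| :=
          Finset.abs_sum_le_sum_abs _ _
      _ ≤ ∑ y, K x y * M := by
          refine Finset.sum_le_sum fun y _ => ?_
          rw [abs_mul, abs_mul, abs_of_nonneg (hK0 x y),
            abs_of_nonneg (hc _ _).1]
          calc K x y * c (hist.length + 1) (hist ++ [x, y]) * |wterm K c φ t y (hist ++ [x])|
              ≤ K x y * 1 * M := by
                apply mul_le_mul
                · exact mul_le_mul_of_nonneg_left (hc _ _).2 (hK0 x y)
                · exact wterm_abs_le φ M hM hφ t y _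
                · exact abs_nonneg _
                · exact mul_nonneg (hK0 x y) zero_le_one
            _ = K x y * M := by ring
      _ = M := by rw [← Finset.sum_mul, hK1, one_mul]

include hK0 hK1 hc in
lemma wterm_gap_bound (h : X → ℝ) (M : ℝ) (hM : 0 ≤ M) (hφ : ∀ y, |h y| ≤ M) :
    ∀ (t : ℕ) (x : X) (hist : List X),
      |wterm K c (expK K h) t x hist - wterm K c h (t+1) x hist|
        ≤ M * (wterm K c (fun _ => (1:ℝ)) t x hist - wterm K c (fun _ => (1:ℝ)) (t+1) x hist)
  | 0, x, hist => by
    have e1 : wterm K c (expK K h) 0 x hist - wterm K c h 1 x hist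
        = ∑ y, K x y * (1 - c (hist.length + 1) (hist ++ [x, y])) * h y := by
      show expK K h x - _ = _
      rw [wterm_succ, expK, ← Finset.sum_sub_distrib]
      refine Finset.sum_congr rfl fun y _ => ?_
      show K x y * h y - K x y * _ * h y = _
      ring
    have e2 : M * (wterm K c (fun _ => (1:ℝ)) 0 x hist - wterm K c (fun _ => (1:ℝ)) 1 x hist)
        = ∑ y, K x y * (1 - c (hist.length + 1) (hist ++ [x, y])) * M := by
      rw [wterm_succ]
      show M * ((1:ℝ) - ∑ y, K x y * c (hist.length + 1) (hist ++ [x, y]) * (1:ℝ)) = _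
      have e3 : ∑ y, K x y * (1 - c (hist.length + 1) (hist ++ [x, y])) * M
          = ∑ y, (M * (K x y * 1) - M * (K x y * c (hist.length + 1) (hist ++ [x, y]) * 1)) :=
        Finset.sum_congr rfl fun y _ => by ring
      rw [e3, Finset.sum_sub_distrib, ← Finset.mul_sum, ← Finset.mul_sum, ← mul_sub]
      simp only [mul_one]
      rw [hK1]
    rw [e1, e2]
    calc |∑ y, K x y * (1 - c (hist.length + 1) (hist ++ [x, y])) * h y|
        ≤ ∑ y, |K x y * (1 - c (hist.length + 1) (hist ++ [x, y])) * h y| :=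
          Finset.abs_sum_le_sum_abs _ _
      _ ≤ ∑ y, K x y * (1 - c (hist.length + 1) (hist ++ [x, y])) * M := by
          refine Finset.sum_le_sum fun y _ => ?_
          rw [abs_mul, abs_mul, abs_of_nonneg (hK0 x y),
            abs_of_nonneg (by linarith [(hc (hist.length + 1) (hist ++ [x, y])).2] : (0:ℝ) ≤ 1 - c (hist.length + 1) (hist ++ [x, y]))]
          exact mul_le_mul_of_nonneg_left (hφ y)
            (mul_nonneg (hK0 x y) (by linarith [(hc (hist.length + 1) (hist ++ [x, y])).2]))
  | (t+1), x, hist => by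
    have e1 : wterm K c (expK K h) (t+1) x hist - wterm K c h (t+2) x hist
        = ∑ y, K x y * c (hist.length + 1) (hist ++ [x, y]) *
            (wterm K c (expK K h) t y (hist ++ [x]) - wterm K c h (t+1) y (hist ++ [x])) := by
      rw [wterm_succ, wterm_succ, ← Finset.sum_sub_distrib]
      refine Finset.sum_congr rfl fun y _ => ?_
      ring
    have e2 : M * (wterm K c (fun _ => (1:ℝ)) (t+1) x hist - wterm K c (fun _ => (1:ℝ)) (t+2) x hist)
        = ∑ y, K x y * c (hist.length + 1) (hist ++ [x, y]) *
            (M * (wterm K c (fun _ => (1:ℝ)) t y (hist ++ [x]) -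
              wterm K c (fun _ => (1:ℝ)) (t+1) y (hist ++ [x]))) := by
      rw [wterm_succ, wterm_succ, mul_sub, Finset.mul_sum, Finset.mul_sum, ← Finset.sum_sub_distrib]
      refine Finset.sum_congr rfl fun y _ => ?_
      ring
    rw [e1, e2]
    calc |∑ y, K x y * c (hist.length + 1) (hist ++ [x, y]) *
            (wterm K c (expK K h) t y (hist ++ [x]) - wterm K c h (t+1) y (hist ++ [x]))|
        ≤ ∑ y, |K x y * c (hist.length + 1) (hist ++ [x, y]) *
            (wterm K c (expK K h) t y (hist ++ [x]) - wterm K c h (t+1) y (hist ++ [x]))| :=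
          Finset.abs_sum_le_sum_abs _ _
      _ ≤ _ := by
          refine Finset.sum_le_sum fun y _ => ?_
          rw [abs_mul, abs_mul, abs_of_nonneg (hK0 x y), abs_of_nonneg (hc _ _).1]
          exact mul_le_mul_of_nonneg_left (wterm_gap_bound h M hM hφ t y _)
            (mul_nonneg (hK0 x y) (hc _ _).1)

include hK0 hK1 hc in
lemma wmass_antitone (t : ℕ) (x : X) (hist : List X) :
    wterm K c (fun _ => (1:ℝ)) (t+1) x hist ≤ wterm K c (fun _ => (1:ℝ)) t x hist := by
  have hE : expK K (fun _ => (1:ℝ)) = fun _ => (1:ℝ) := by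
    funext y; simp [expK, hK1 y]
  have := wterm_gap_bound K c hK0 hK1 hc (fun _ => (1:ℝ)) 1 zero_le_one
    (fun y => by norm_num) t x hist
  rw [hE, one_mul] at this
  have h2 := le_trans (abs_nonneg _) this
  linarith

include hK0 hK1 hc in
lemma wmass_mem (t : ℕ) (x : X) (hist : List X) :
    wterm K c (fun _ => (1:ℝ)) t x hist ∈ Set.Icc (0:ℝ) 1 := by
  constructor
  · induction t generalizing x hist with
    | zero => exact zero_le_one
    | succ t ih =>
        rw [wterm_succ]
        exact Finset.sum_nonneg fun y _ =>
          mul_nonneg (mul_nonneg (hK0 x y) (hc _ _).1) (ih y _)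
  · have := wterm_abs_le K c hK0 hK1 hc (fun _ => (1:ℝ)) 1 zero_le_one
      (fun y => by norm_num) t x hist
    exact le_trans (le_abs_self _) this


lemma wterm_bellman (γ : ℝ) (h : X → ℝ) : ∀ (t : ℕ) (x : X) (hist : List X),
    wterm K c (fun y => γ * expK K h y - h y) t x hist
      = γ * wterm K c (expK K h) t x hist - wterm K c h t x hist
  | 0, x, hist => rfl
  | (t+1), x, hist => by
    simp only [wterm_succ]
    rw [Finset.mul_sum, ← Finset.sum_sub_distrib]
    refine Finset.sum_congr rfl fun y _ => ?_
    rw [wterm_bellman γ h t]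
    ring

include hK0 hK1 hc in
lemma expK_abs_le_s4 (h : X → ℝ) (M : ℝ) (hb : ∀ y, |h y| ≤ M) (y : X) : |expK K h y| ≤ M := by
  rw [expK]
  calc |∑ z, K y z * h z| ≤ ∑ z, |K y z * h z| := Finset.abs_sum_le_sum_abs _ _
    _ ≤ ∑ z, K y z * M := Finset.sum_le_sum fun z _ => by
        rw [abs_mul, abs_of_nonneg (hK0 y z)]
        exact mul_le_mul_of_nonneg_left (hb z) (hK0 y z)
    _ = M := by rw [← Finset.sum_mul, hK1, one_mul]

include hK0 hK1 hc in
lemma key_lemma (h : X → ℝ) (M : ℝ) (hM : 0 ≤ M) (hb : ∀ y, |h y| ≤ M)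
    (γ : ℝ) (hγ0 : 0 ≤ γ) (hγ1 : γ < 1) (x : X) :
    Summable (fun t : ℕ => γ ^ t * wterm K c (fun y => γ * expK K h y - h y) t x []) ∧
    |(∑' t : ℕ, γ ^ t * wterm K c (fun y => γ * expK K h y - h y) t x []) + h x| ≤ γ * M := by
  set e : ℕ → ℝ := fun t =>
    γ ^ (t+1) * (wterm K c (expK K h) t x [] - wterm K c h (t+1) x []) with he
  set v : ℕ → ℝ := fun t => γ ^ t * wterm K c h t x [] with hv
  set m : ℕ → ℝ := fun t => wterm K c (fun _ => (1:ℝ)) t x [] with hm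
  have hγt : ∀ t : ℕ, (0:ℝ) ≤ γ ^ t := fun t => pow_nonneg hγ0 t
  have hγle : ∀ t : ℕ, γ ^ (t+1) ≤ γ := fun t => by
    calc γ ^ (t+1) = γ * γ ^ t := by ring
      _ ≤ γ * 1 := mul_le_mul_of_nonneg_left
          (pow_le_one₀ hγ0 hγ1.le) hγ0
      _ = γ := mul_one γ
  have hdecomp : ∀ t, γ ^ t * wterm K c (fun y => γ * expK K h y - h y) t x []
      = e t + (v (t+1) - v t) := fun t => by
    rw [wterm_bellman K c γ h t x [], he, hv]
    ring
  -- bounds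
  have hgap := wterm_gap_bound K c hK0 hK1 hc h M hM hb
  have heb : ∀ t, |e t| ≤ γ * M * (m t - m (t+1)) := fun t => by
    rw [he, hm, abs_mul, abs_of_nonneg (hγt (t+1))]
    calc γ ^ (t+1) * |wterm K c (expK K h) t x [] - wterm K c h (t+1) x []|
        ≤ γ ^ (t+1) * (M * (wterm K c (fun _ => (1:ℝ)) t x [] -
            wterm K c (fun _ => (1:ℝ)) (t+1) x [])) :=
          mul_le_mul_of_nonneg_left (hgap t x []) (hγt (t+1))
      _ ≤ γ * (M * (wterm K c (fun _ => (1:ℝ)) t x [] -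
            wterm K c (fun _ => (1:ℝ)) (t+1) x [])) := by
          refine mul_le_mul_of_nonneg_right (hγle t) ?_
          have := wmass_antitone K c hK0 hK1 hc t x []
          have := hM
          nlinarith
      _ = γ * M * (wterm K c (fun _ => (1:ℝ)) t x [] -
            wterm K c (fun _ => (1:ℝ)) (t+1) x []) := by ring
  have hBnn : ∀ t, 0 ≤ γ * M * (m t - m (t+1)) := fun t => by
    have := wmass_antitone K c hK0 hK1 hc t x []
    rw [hm]
    have : (0:ℝ) ≤ wterm K c (fun _ => (1:ℝ)) t x [] - wterm K c (fun _ => (1:ℝ)) (t+1) x [] := by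
      linarith
    positivity
  have hBpartial : ∀ n, ∑ t ∈ Finset.range n, γ * M * (m t - m (t+1)) ≤ γ * M := fun n => by
    rw [← Finset.mul_sum, Finset.sum_range_sub' m]
    have hm0 : m 0 = 1 := rfl
    have hmn : 0 ≤ m n := (wmass_mem K c hK0 hK1 hc n x []).1
    have : m 0 - m n ≤ 1 := by rw [hm0]; linarith
    nlinarith [mul_nonneg hγ0 hM]
  have hBsummable : Summable (fun t => γ * M * (m t - m (t+1))) :=
    summable_of_sum_range_le hBnn hBpartial
  have habssum : Summable (fun t => |e t|) :=
    Summable.of_nonneg_of_le (fun t => abs_nonneg _) heb hBsummable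
  have hsume : Summable e := habssum.of_abs
  have hvb : ∀ t, |v t| ≤ M * γ ^ t := fun t => by
    rw [hv, abs_mul, abs_of_nonneg (hγt t), mul_comm]
    exact mul_le_mul_of_nonneg_right
      (wterm_abs_le K c hK0 hK1 hc h M hM hb t x []) (hγt t)
  have hsumv : Summable v := by
    refine Summable.of_norm_bounded (g := fun t => M * γ ^ t)
      (((summable_geometric_of_lt_one hγ0 hγ1)).mul_left M) ?_
    intro t; exact hvb t
  have hsumd : Summable (fun t => v (t+1) - v t) :=
    ((summable_nat_add_iff 1).mpr hsumv).sub hsumv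
  have hfun : (fun t : ℕ => γ ^ t * wterm K c (fun y => γ * expK K h y - h y) t x [])
      = fun t => e t + (v (t+1) - v t) := funext hdecomp
  have hsums : Summable (fun t : ℕ => γ ^ t * wterm K c (fun y => γ * expK K h y - h y) t x []) := by
    rw [hfun]; exact hsume.add hsumd
  refine ⟨hsums, ?_⟩
  -- tsum of d
  have hv0 : Filter.Tendsto v Filter.atTop (nhds 0) := by
    refine squeeze_zero_norm (a := fun t : ℕ => M * γ ^ t) (fun t => ?_) ?_
    · rw [Real.norm_eq_abs]; exact hvb t
    · simpa using (tendsto_pow_atTop_nhds_zero_of_lt_one hγ0 hγ1).const_mul M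
  have hdsum : HasSum (fun t => v (t+1) - v t) (0 - v 0) := by
    rw [hsumd.hasSum_iff_tendsto_nat]
    have hps : ∀ n, ∑ t ∈ Finset.range n, (v (t+1) - v t) = v n - v 0 := fun n =>
      Finset.sum_range_sub v n
    simp only [hps]
    exact hv0.sub_const (v 0)
  have htd : (∑' t, (v (t+1) - v t)) = 0 - v 0 := hdsum.tsum_eq
  have htsplit : (∑' t : ℕ, γ ^ t * wterm K c (fun y => γ * expK K h y - h y) t x [])
      = (∑' t, e t) + (∑' t, (v (t+1) - v t)) := by
    rw [hfun]; exact Summable.tsum_add hsume hsumd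
  have hv0eq : v 0 = h x := by rw [hv]; simp [wterm]
  rw [htsplit, htd, hv0eq]
  have habssum' : Summable (fun t => ‖e t‖) := by
    have : (fun t => ‖e t‖) = fun t => |e t| := funext fun t => Real.norm_eq_abs _
    rw [this]; exact habssum
  have h1 : ‖∑' t, e t‖ ≤ ∑' t, ‖e t‖ := norm_tsum_le_tsum_norm habssum'
  have h2 : (∑' t, ‖e t‖) = ∑' t, |e t| := tsum_congr fun t => Real.norm_eq_abs _
  rw [Real.norm_eq_abs, h2] at h1
  have : |∑' t, e t| ≤ γ * M :=
    calc |∑' t, e t| ≤ ∑' t, |e t| := h1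
      _ ≤ ∑' t, γ * M * (m t - m (t+1)) := Summable.tsum_le_tsum heb habssum hBsummable
      _ ≤ γ * M := Real.tsum_le_of_sum_range_le hBnn hBpartial
  have harg : (∑' t, e t) + (0 - h x) + h x = ∑' t, e t := by ring
  rw [harg]
  exact this

end aux

/-- The off-policy per-agent operator `R^i` with trace coefficients `c`:
`(R^i f)(s,a^{-i}) = f(s,a^{-i}) + E_{a₀^i ~ μ^i}[ ρ₀^i ·
E_μ[ Σ_{t≥0} γ^t (∏_{j=1}^t c_j^i)(r_t + γ f_{t+1} - f_t) | s₀ = s, a₀ = (a₀^i,a^{-i})]]`.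
`K` is the chain kernel of `(s_t,a_t)` under the behavior policy `μ`, `mui` and `pii`
are agent `i`'s behavior and target policies, and `ρ₀^i = π^i(a₀^i)/μ^i(a₀^i)`. -/
noncomputable def RopOff {S : Type*} {ι : Type*} [Fintype S] [Fintype ι] [DecidableEq ι]
    (A : ι → Type*) [∀ j, Fintype (A j)] (i : ι)
    (K : (S × ((j : ι) → A j)) → (S × ((j : ι) → A j)) → ℝ)
    (r : (S × ((j : ι) → A j)) → ℝ) (mui pii : S → A i → ℝ)
    (c : ℕ → List (S × ((j : ι) → A j)) → ℝ) (γ : ℝ)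
    (f : (S × ((j : ι) → A j)) → ℝ) : (S × ((j : ι) → A j)) → ℝ :=
  fun x => f x + ∑ b : A i, mui x.1 b * (pii x.1 b / mui x.1 b) *
    ∑' t : ℕ, γ ^ t *
      wterm K c (fun y => r y + γ * expK K f y - f y) t (x.1, Function.update x.2 i b) []

/-- With truncated trace coefficients `c_t^i ∈ [0,1]` (arbitrary
functions of the trajectory prefix up to time `t`), the off-policy per-agent operator
is a `γ`-contraction in the sup-norm on bounded functions of `(s, a^{-i})`. -/
theorem RopOff_gamma_contraction {S : Type*} {ι : Type*} [Fintype S] [Fintype ι]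
    [DecidableEq ι] (A : ι → Type*) [∀ j, Fintype (A j)] (i : ι)
    (K : (S × ((j : ι) → A j)) → (S × ((j : ι) → A j)) → ℝ)
    (hK0 : ∀ x y, 0 ≤ K x y) (hK1 : ∀ x, ∑ y, K x y = 1)
    (r : (S × ((j : ι) → A j)) → ℝ)
    (mui pii : S → A i → ℝ)
    (hmu0 : ∀ s b, 0 < mui s b) (hmu1 : ∀ s, ∑ b, mui s b = 1)
    (hpi0 : ∀ s b, 0 ≤ pii s b) (hpi1 : ∀ s, ∑ b, pii s b = 1)
    (c : ℕ → List (S × ((j : ι) → A j)) → ℝ)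
    (hc : ∀ t l, c t l ∈ Set.Icc (0 : ℝ) 1)
    (γ : ℝ) (hγ0 : 0 ≤ γ) (hγ1 : γ < 1)
    (f g : (S × ((j : ι) → A j)) → ℝ)
    (hf : ∀ s (a b : (j : ι) → A j), (∀ j, j ≠ i → a j = b j) → f (s, a) = f (s, b))
    (hg : ∀ s (a b : (j : ι) → A j), (∀ j, j ≠ i → a j = b j) → g (s, a) = g (s, b)) :
    ‖RopOff A i K r mui pii c γ f - RopOff A i K r mui pii c γ g‖ ≤ γ * ‖f - g‖ := by
  rw [pi_norm_le_iff_of_nonneg (by positivity)]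
  intro x
  rw [Pi.sub_apply, Real.norm_eq_abs]
  set M := ‖f - g‖ with hMdef
  have hM0 : 0 ≤ M := norm_nonneg _
  -- the difference function
  have hb : ∀ y, |f y - g y| ≤ M := fun y => by
    have := norm_le_pi_norm (f - g) y
    simpa [Real.norm_eq_abs] using this
  -- leaf functions
  have hufb : ∀ y, |r y + γ * expK K f y - f y| ≤
      ‖(fun y => r y + γ * expK K f y - f y : _ → ℝ)‖ := fun y => by
    simpa [Real.norm_eq_abs] using
      norm_le_pi_norm (fun y => r y + γ * expK K f y - f y) y
  have hugb : ∀ y, |r y + γ * expK K g y - g y| ≤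
      ‖(fun y => r y + γ * expK K g y - g y : _ → ℝ)‖ := fun y => by
    simpa [Real.norm_eq_abs] using
      norm_le_pi_norm (fun y => r y + γ * expK K g y - g y) y
  -- leaf identity
  have hΔeq : (fun y => (r y + γ * expK K f y - f y) - (r y + γ * expK K g y - g y))
      = (fun y => γ * expK K (fun z => f z - g z) y - (f y - g y)) := by
    funext y
    have hEsub : expK K (fun z => f z - g z) y = expK K f y - expK K g y := by
      rw [expK, expK, expK, ← Finset.sum_sub_distrib]
      exact Finset.sum_congr rfl fun z _ => by ring
    rw [hEsub]; ring
  have hwd : ∀ (t : ℕ) (z : S × ((j : ι) → A j)),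
      γ ^ t * wterm K c (fun y => γ * expK K (fun z => f z - g z) y - (f y - g y)) t z []
      = γ ^ t * wterm K c (fun y => r y + γ * expK K f y - f y) t z []
        - γ ^ t * wterm K c (fun y => r y + γ * expK K g y - g y) t z [] := fun t z => by
    have h1 := wterm_sub K c (fun y => r y + γ * expK K f y - f y)
      (fun y => r y + γ * expK K g y - g y) t z []
    rw [hΔeq] at h1
    rw [h1]; ring
  -- summability of the two leaf series
  have hsf : ∀ z, Summable (fun t : ℕ => γ ^ t *
      wterm K c (fun y => r y + γ * expK K f y - f y) t z []) := fun z => by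
    refine Summable.of_norm_bounded
      (g := fun t => ‖(fun y => r y + γ * expK K f y - f y : _ → ℝ)‖ * γ ^ t)
      ((summable_geometric_of_lt_one hγ0 hγ1).mul_left _) fun t => ?_
    rw [Real.norm_eq_abs, abs_mul, abs_of_nonneg (pow_nonneg hγ0 t), mul_comm]
    exact mul_le_mul_of_nonneg_right
      (wterm_abs_le K c hK0 hK1 hc _ _ (norm_nonneg _) hufb t _ _) (pow_nonneg hγ0 t)
  have hsg : ∀ z, Summable (fun t : ℕ => γ ^ t *
      wterm K c (fun y => r y + γ * expK K g y - g y) t z []) := fun z => by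
    refine Summable.of_norm_bounded
      (g := fun t => ‖(fun y => r y + γ * expK K g y - g y : _ → ℝ)‖ * γ ^ t)
      ((summable_geometric_of_lt_one hγ0 hγ1).mul_left _) fun t => ?_
    rw [Real.norm_eq_abs, abs_mul, abs_of_nonneg (pow_nonneg hγ0 t), mul_comm]
    exact mul_le_mul_of_nonneg_right
      (wterm_abs_le K c hK0 hK1 hc _ _ (norm_nonneg _) hugb t _ _) (pow_nonneg hγ0 t)
  -- difference of the tsums
  have hTd : ∀ z, (∑' t : ℕ, γ ^ t * wterm K c (fun y => r y + γ * expK K f y - f y) t z [])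
      - (∑' t : ℕ, γ ^ t * wterm K c (fun y => r y + γ * expK K g y - g y) t z [])
      = ∑' t : ℕ, γ ^ t *
          wterm K c (fun y => γ * expK K (fun w => f w - g w) y - (f y - g y)) t z [] := fun z => by
    rw [← Summable.tsum_sub (hsf z) (hsg z)]
    exact (tsum_congr fun t => hwd t z).symm
  -- weights simplify
  have hW : ∀ b, mui x.1 b * (pii x.1 b / mui x.1 b) = pii x.1 b := fun b => by
    rw [mul_comm]; exact div_mul_cancel₀ _ (hmu0 x.1 b).ne'
  -- invariance of f - g along the i-th coordinate update
  have hhxb : ∀ b : A i, f (x.1, Function.update x.2 i b) - g (x.1, Function.update x.2 i b)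
      = f x - g x := fun b => by
    have h1 : f (x.1, Function.update x.2 i b) = f (x.1, x.2) :=
      hf x.1 _ _ (fun j hj => Function.update_of_ne hj _ _)
    have h2 : g (x.1, Function.update x.2 i b) = g (x.1, x.2) :=
      hg x.1 _ _ (fun j hj => Function.update_of_ne hj _ _)
    rw [h1, h2]
  -- the key per-point estimate
  have hkey := fun b : A i => key_lemma K c hK0 hK1 hc (fun z => f z - g z) M hM0 hb
    γ hγ0 hγ1 (x.1, Function.update x.2 i b)
  -- rewrite the difference
  have hEq : RopOff A i K r mui pii c γ f x - RopOff A i K r mui pii c γ g x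
      = ∑ b : A i, pii x.1 b *
          ((∑' t : ℕ, γ ^ t * wterm K c (fun y => γ * expK K (fun w => f w - g w) y - (f y - g y))
              t (x.1, Function.update x.2 i b) []) + (f x - g x)) := by
    show (f x + ∑ b : A i, mui x.1 b * (pii x.1 b / mui x.1 b) *
        ∑' t : ℕ, γ ^ t * wterm K c (fun y => r y + γ * expK K f y - f y) t
          (x.1, Function.update x.2 i b) [])
      - (g x + ∑ b : A i, mui x.1 b * (pii x.1 b / mui x.1 b) *
        ∑' t : ℕ, γ ^ t * wterm K c (fun y => r y + γ * expK K g y - g y) t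
          (x.1, Function.update x.2 i b) []) = _
    have step1 : ∀ b : A i, mui x.1 b * (pii x.1 b / mui x.1 b) *
        (∑' t : ℕ, γ ^ t * wterm K c (fun y => r y + γ * expK K f y - f y) t
          (x.1, Function.update x.2 i b) [])
      - mui x.1 b * (pii x.1 b / mui x.1 b) *
        (∑' t : ℕ, γ ^ t * wterm K c (fun y => r y + γ * expK K g y - g y) t
          (x.1, Function.update x.2 i b) [])
      = pii x.1 b * (∑' t : ℕ, γ ^ t *
          wterm K c (fun y => γ * expK K (fun w => f w - g w) y - (f y - g y)) t
            (x.1, Function.update x.2 i b) []) := fun b => by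
      rw [hW b, ← mul_sub, hTd]
    calc (f x + ∑ b : A i, mui x.1 b * (pii x.1 b / mui x.1 b) *
        ∑' t : ℕ, γ ^ t * wterm K c (fun y => r y + γ * expK K f y - f y) t
          (x.1, Function.update x.2 i b) [])
      - (g x + ∑ b : A i, mui x.1 b * (pii x.1 b / mui x.1 b) *
        ∑' t : ℕ, γ ^ t * wterm K c (fun y => r y + γ * expK K g y - g y) t
          (x.1, Function.update x.2 i b) [])
        = (f x - g x) + ∑ b : A i, pii x.1 b * (∑' t : ℕ, γ ^ t *
            wterm K c (fun y => γ * expK K (fun w => f w - g w) y - (f y - g y)) t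
              (x.1, Function.update x.2 i b) []) := by
          rw [← Finset.sum_congr rfl (fun b _ => step1 b), Finset.sum_sub_distrib]
          ring
      _ = ∑ b : A i, pii x.1 b *
          ((∑' t : ℕ, γ ^ t * wterm K c (fun y => γ * expK K (fun w => f w - g w) y - (f y - g y))
              t (x.1, Function.update x.2 i b) []) + (f x - g x)) := by
          have expand : ∀ b : A i, pii x.1 b *
              ((∑' t : ℕ, γ ^ t * wterm K c (fun y => γ * expK K (fun w => f w - g w) y - (f y - g y))
                  t (x.1, Function.update x.2 i b) []) + (f x - g x))
            = pii x.1 b * (∑' t : ℕ, γ ^ t *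
                wterm K c (fun y => γ * expK K (fun w => f w - g w) y - (f y - g y)) t
                  (x.1, Function.update x.2 i b) []) + pii x.1 b * (f x - g x) := fun b => by ring
          rw [Finset.sum_congr rfl (fun b _ => expand b), Finset.sum_add_distrib,
            ← Finset.sum_mul, hpi1 x.1, one_mul]
          ring
  rw [hEq]
  calc |∑ b : A i, pii x.1 b *
          ((∑' t : ℕ, γ ^ t * wterm K c (fun y => γ * expK K (fun w => f w - g w) y - (f y - g y))
              t (x.1, Function.update x.2 i b) []) + (f x - g x))|
      ≤ ∑ b : A i, |pii x.1 b *
          ((∑' t : ℕ, γ ^ t * wterm K c (fun y => γ * expK K (fun w => f w - g w) y - (f y - g y))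
              t (x.1, Function.update x.2 i b) []) + (f x - g x))| :=
        Finset.abs_sum_le_sum_abs _ _
    _ ≤ ∑ b : A i, pii x.1 b * (γ * M) := by
        refine Finset.sum_le_sum fun b _ => ?_
        rw [abs_mul, abs_of_nonneg (hpi0 x.1 b)]
        refine mul_le_mul_of_nonneg_left ?_ (hpi0 x.1 b)
        rw [← hhxb b]
        exact (hkey b).2
    _ = γ * M := by rw [← Finset.sum_mul, hpi1, one_mul]
end
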